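/- Let D be a Q-algebra which is a 2-dimensional Q-vector space, and let O be an order (a subring that is a full-rank Z-lattice) of D. If O ⊗ Z/2Z is isomorphic as an F₂-algebra to F₄, then D is a quadratic field (i.e., D has no zero divisors). -/

import Mathlib

/-!
Reduction modulo 2 maps `O` onto `O ⊗ ℤ/2 ≅ O/2O`, a field, so `2O` is prime in `O`. As `O` is
a finitely generated free `ℤ`-module, Krull's intersection theorem writes each nonzero element as
`2^k a'` with `a' ∉ 2O`; since `O` is torsion-free, a zero-divisor relation in `O` between such
elements would survive in `O/2O`. So `O` is a domain, and so is `D`, because every element of `D`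
has a nonzero integer multiple in `O`.
-/

open TensorProduct
open scoped Pointwise

theorem TensorProduct.tmul_one_zmod_eq_zero_iff {M : Type*} [AddCommGroup M] (n : ℕ) (m : M) :
    m ⊗ₜ[ℤ] (1 : ZMod n) = 0 ↔ m ∈ (n : ℤ) • (⊤ : Submodule ℤ M) := by
  let q : ZMod n ≃ₗ[ℤ] ℤ ⧸ Ideal.span {(n : ℤ)} :=
    (Int.quotientSpanNatEquivZMod n).symm.toAddEquiv.toIntLinearEquiv
  let e : M ⊗[ℤ] ZMod n ≃ₗ[ℤ] M ⧸ (n : ℤ) • (⊤ : Submodule ℤ M) :=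
    q.lTensor M ≪≫ₗ tensorQuotEquivQuotSMul M _ ≪≫ₗ
      Submodule.quotEquivOfEq _ _ (Submodule.ideal_span_singleton_smul _ _)
  have hq : q 1 = Ideal.Quotient.mk _ 1 := (Int.quotientSpanNatEquivZMod n).symm.map_one
  have he : e (m ⊗ₜ 1) = Submodule.Quotient.mk m := by
    change Submodule.quotEquivOfEq _ _ (Submodule.ideal_span_singleton_smul _ _)
      (tensorQuotEquivQuotSMul M _ (m ⊗ₜ q 1)) = _
    rw [hq, tensorQuotEquivQuotSMul_tmul_mk, one_smul]
    rfl
  rw [← e.map_eq_zero_iff, he, Submodule.Quotient.mk_eq_zero]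

theorem Submodule.exists_eq_pow_smul_notMem_smul_top {R M : Type*} [CommRing R] [IsDomain R]
    [IsNoetherianRing R] [AddCommGroup M] [Module R M] [Module.Finite R M]
    [Module.IsTorsionFree R M] {r : R} (hr : ¬IsUnit r) {a : M} (ha : a ≠ 0) :
    ∃ (k : ℕ) (a' : M), a = r ^ k • a' ∧ a' ∉ r • (⊤ : Submodule R M) := by
  classical
  have hkrull : (⨅ i : ℕ, r ^ i • ⊤ : Submodule R M) = ⊥ := by
    simpa [Ideal.span_singleton_pow, Submodule.ideal_span_singleton_smul] using
      (Ideal.span {r}).iInf_pow_smul_eq_bot_of_isTorsionFree (M := M)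
        (by rwa [Ne, Ideal.span_singleton_eq_top])
  have hex : ∃ i : ℕ, a ∉ r ^ i • (⊤ : Submodule R M) := by
    by_contra! h
    exact ha ((Submodule.mem_bot R).mp (hkrull ▸ Submodule.mem_iInf _ |>.mpr h))
  obtain ⟨k, hk⟩ : ∃ k, Nat.find hex = k + 1 :=
    Nat.exists_eq_succ_of_ne_zero fun h0 => Nat.find_spec hex (by simp [h0])
  have hak : a ∈ r ^ k • (⊤ : Submodule R M) := not_not.mp (Nat.find_min hex (by omega))
  obtain ⟨a', -, rfl⟩ := (Submodule.mem_smul_pointwise_iff_exists _ _ _).mp hak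
  refine ⟨k, a', rfl, fun ha' => Nat.find_spec hex ?_⟩
  obtain ⟨a'', -, rfl⟩ := (Submodule.mem_smul_pointwise_iff_exists _ _ _).mp ha'
  rw [hk, smul_smul, ← pow_succ]
  exact Submodule.smul_mem_pointwise_smul _ _ _ Submodule.mem_top

theorem noZeroDivisors_of_noZeroDivisors_tensor_zmod {A : Type*} [Ring A] [Module.Finite ℤ A]
    [Module.IsTorsionFree ℤ A] {n : ℕ} (hn : 1 < n) [NoZeroDivisors (A ⊗[ℤ] ZMod n)] :
    NoZeroDivisors A := by
  have hunit : ¬IsUnit (n : ℤ) := by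
    rw [Int.isUnit_iff]; omega
  let f : A →+* A ⊗[ℤ] ZMod n := Algebra.TensorProduct.includeLeftRingHom
  have hf : ∀ a, f a = 0 → a ∈ (n : ℤ) • (⊤ : Submodule ℤ A) :=
    fun a => (TensorProduct.tmul_one_zmod_eq_zero_iff n a).mp
  refine ⟨fun {a c} hac => ?_⟩
  by_contra! h
  obtain ⟨j, a', rfl, ha'⟩ := Submodule.exists_eq_pow_smul_notMem_smul_top hunit h.1
  obtain ⟨k, c', rfl, hc'⟩ := Submodule.exists_eq_pow_smul_notMem_smul_top hunit h.2
  have hac' : a' * c' = 0 := by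
    refine smul_right_injective A (pow_ne_zero (k + j) (by omega : (n : ℤ) ≠ 0)) ?_
    simpa only [smul_zero, smul_mul_assoc, mul_smul_comm, smul_smul, ← pow_add] using hac
  rcases mul_eq_zero.mp (show f a' * f c' = 0 by rw [← map_mul, hac', map_zero]) with h | h
  · exact ha' (hf a' h)
  · exact hc' (hf c' h)

theorem AddSubgroup.exists_zsmul_mem_of_span_rat_eq_top {V : Type*} [AddCommGroup V] [Module ℚ V]
    {G : AddSubgroup V} (hG : Submodule.span ℚ (G : Set V) = ⊤) (x : V) :
    ∃ n : ℤ, n ≠ 0 ∧ n • x ∈ G := by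
  obtain ⟨y, hy, z, rfl⟩ := (IsLocalization.mem_span_iff (nonZeroDivisors ℤ) (S := ℚ)).mp
    (hG ▸ Submodule.mem_top (x := x))
  have hyG : y ∈ G := by
    rwa [← Submodule.mem_toAddSubgroup, Submodule.span_int_eq_addSubgroupClosure,
      AddSubgroup.closure_eq] at hy
  refine ⟨z, nonZeroDivisors.coe_ne_zero z, ?_⟩
  rwa [← algebraMap_smul ℚ, smul_smul, IsLocalization.mk'_spec', map_one, one_smul]

theorem Subring.noZeroDivisors_of_span_rat_eq_top {D : Type*} [Ring D] [Algebra ℚ D]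
    {O : Subring D} (hO : Submodule.span ℚ (O : Set D) = ⊤) [NoZeroDivisors O] :
    NoZeroDivisors D := by
  have eq_zero_of_zsmul {n : ℤ} (hn : n ≠ 0) {x : D} (h : n • x = 0) : x = 0 := by
    rw [← Int.cast_smul_eq_zsmul ℚ] at h
    exact (smul_eq_zero.mp h).resolve_left (Int.cast_ne_zero.mpr hn)
  refine ⟨fun {x y} hxy => ?_⟩
  obtain ⟨n, hn, hnx⟩ := O.toAddSubgroup.exists_zsmul_mem_of_span_rat_eq_top hO x
  obtain ⟨m, hm, hmy⟩ := O.toAddSubgroup.exists_zsmul_mem_of_span_rat_eq_top hO y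
  have hprod : (⟨n • x, hnx⟩ * ⟨m • y, hmy⟩ : O) = 0 := by
    ext
    change (n • x) * (m • y) = 0
    rw [smul_mul_assoc, mul_smul_comm, hxy, smul_zero, smul_zero]
  rcases mul_eq_zero.mp hprod with h | h
  · exact .inl (eq_zero_of_zsmul hn (congrArg Subtype.val h))
  · exact .inr (eq_zero_of_zsmul hm (congrArg Subtype.val h))

theorem stmt1_general (D : Type) [Ring D] [Algebra ℚ D]
    (O : Subring D) (b : Module.Basis (Fin 2) ℤ O)
    (hfull : Submodule.span ℚ (O : Set D) = ⊤)
    (h4 : Nonempty ((O ⊗[ℤ] ZMod 2) ≃+* GaloisField 2 2)) :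
    ∀ x y : D, x * y = 0 → x = 0 ∨ y = 0 := by
  obtain ⟨e⟩ := h4
  have : NoZeroDivisors (O ⊗[ℤ] ZMod 2) := e.toMulEquiv.noZeroDivisors
  have : Module.Finite ℤ O := .of_basis b
  have : Module.Free ℤ O := .of_basis b
  have : NoZeroDivisors O := noZeroDivisors_of_noZeroDivisors_tensor_zmod one_lt_two
  have : NoZeroDivisors D := Subring.noZeroDivisors_of_span_rat_eq_top hfull
  exact fun _ _ => eq_zero_or_eq_zero_of_mul_eq_zero

/-- Let `D` be a `ℚ`-algebra which is a 2-dimensional `ℚ`-vector space, and let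
`O` be an order (a subring that is a full-rank `ℤ`-lattice) of `D`.  If `O ⊗ ℤ/2ℤ` is
isomorphic as an `𝔽₂`-algebra to `𝔽₄`, then `D` has no zero divisors. -/
theorem stmt1 (D : Type) [Ring D] [Algebra ℚ D] (hdim : Module.finrank ℚ D = 2)
    (O : Subring D) (b : Module.Basis (Fin 2) ℤ O)
    (hfull : Submodule.span ℚ (O : Set D) = ⊤)
    (h4 : Nonempty ((O ⊗[ℤ] ZMod 2) ≃+* GaloisField 2 2)) :
    ∀ x y : D, x * y = 0 → x = 0 ∨ y = 0 :=
  stmt1_general D O b hfull h4
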